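/- arXiv:2509.06919 — 2 statements merged into one kernel-verified Lean document; each statement's English description precedes it below -/
import Mathlib

section
/- Let q be a prime power, 0 ≤ h < k ≤ n ≤ q+1, let α_1,…,α_{n−1} be distinct elements of F_q and b,c,λ,η ∈ F_q. The code RCTRS_{h,1}(α,b,c,λ,η) is MDS if and only if both of the following hold: (i) for every subset I = {i_1,…,i_k} ⊆ {1,…,n−1} of size k, (−1)^{k−h} η σ_{k−h}(α_{i_1},…,α_{i_k}) ≠ 1; and (ii) for every subset J = {i_1,…,i_{k−1}} ⊆ {1,…,n−1} of size k−1, Φ_{J,h}(b) ≠ λ Φ_{J,h}(c). -/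
open Polynomial Finset

noncomputable section

variable {F : Type*} [Field F]

/-- The twisted polynomial `∑_{i<k} f_i x^i + η f_h x^{k-1+t}` from `V_{k,t,h,η}`. -/
def twPoly (k t h : ℕ) (η : F) (f : Fin k → F) : Polynomial F :=
  (∑ i : Fin k, Polynomial.C (f i) * Polynomial.X ^ (i : ℕ)) +
    Polynomial.C (η * if hh : h < k then f ⟨h, hh⟩ else 0) * Polynomial.X ^ (k - 1 + t)

/-- The coefficient `f_{k-1}` of a coefficient vector `f : Fin k → F`. -/
def topCoeffFin {k : ℕ} (f : Fin k → F) : F :=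
  if hk : k - 1 < k then f ⟨k - 1, hk⟩ else 0

/-- Codewords of the row-column twisted Reed-Solomon code. -/
def rctrsWords (k t h : ℕ) (η : F) {m : ℕ} (α : Fin m → F) (b c lam : F) :
    Set (Fin (m + 1) → F) :=
  { w | ∃ f : Fin k → F,
      w = Fin.snoc (fun i => (twPoly k t h η f).eval (α i))
            ((twPoly k t h η f).eval b - lam * (twPoly k t h η f).eval c) }

/-- The row-column twisted Reed-Solomon code `RCTRS_{h,t}(α,b,c,λ,η)`. -/
def RCTRS (k t h : ℕ) (η : F) {m : ℕ} (α : Fin m → F) (b c lam : F) :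
    Submodule F (Fin (m + 1) → F) :=
  Submodule.span F (rctrsWords k t h η α b c lam)

/-- Codewords of the extended row-column twisted Reed-Solomon code. -/
def rctrsWordsExt (k t h : ℕ) (η : F) {m : ℕ} (α : Fin m → F) (b c lam : F) :
    Set (Fin (m + 2) → F) :=
  { w | ∃ f : Fin k → F,
      w = Fin.snoc (Fin.snoc (fun i => (twPoly k t h η f).eval (α i))
            ((twPoly k t h η f).eval b - lam * (twPoly k t h η f).eval c)) (topCoeffFin f) }

/-- The extended row-column twisted Reed-Solomon code `RCTRS_{h,t}(α,b,c,λ,η,∞)`. -/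
def RCTRSext (k t h : ℕ) (η : F) {m : ℕ} (α : Fin m → F) (b c lam : F) :
    Submodule F (Fin (m + 2) → F) :=
  Submodule.span F (rctrsWordsExt k t h η α b c lam)

/-- Hamming weight. -/
def wt {n : ℕ} (x : Fin n → F) : ℕ := Nat.card {i : Fin n // x i ≠ 0}

/-- An `[n,k]` code is MDS if it has dimension `k` and minimum Hamming distance `n-k+1`. -/
def IsMDS {n : ℕ} (C : Submodule F (Fin n → F)) (k : ℕ) : Prop :=
  Module.finrank F C = k ∧ ∀ x ∈ C, x ≠ 0 → n - k + 1 ≤ wt x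

/-- The Schur square of a code. -/
def schurSq {n : ℕ} (C : Submodule F (Fin n → F)) : Submodule F (Fin n → F) :=
  Submodule.span F { w | ∃ x ∈ C, ∃ y ∈ C, w = x * y }

/-- Code equivalence: a permutation of coordinates followed by nonzero coordinatewise scaling. -/
def codeEquiv {n : ℕ} (C D : Submodule F (Fin n → F)) : Prop :=
  ∃ σ : Equiv.Perm (Fin n), ∃ v : Fin n → F, (∀ i, v i ≠ 0) ∧
    (C : Set (Fin n → F)) =
      (fun x : Fin n → F => fun i => v i * x (σ i)) '' (D : Set (Fin n → F))

/-- Generalized Reed-Solomon code. -/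
def GRS (k : ℕ) {n : ℕ} (α v : Fin n → F) : Submodule F (Fin n → F) :=
  Submodule.span F
    { w | ∃ f ∈ Polynomial.degreeLT F k, w = fun i => v i * Polynomial.eval (α i) f }

/-- Extended generalized Reed-Solomon code. -/
def GRSext (k : ℕ) {n : ℕ} (α v : Fin n → F) : Submodule F (Fin (n + 1) → F) :=
  Submodule.span F
    { w | ∃ f ∈ Polynomial.degreeLT F k,
        w = Fin.snoc (fun i => v i * Polynomial.eval (α i) f) (f.coeff (k - 1)) }

/-- A code of length `m+1` is non-RS if it is equivalent to no GRS and no extended GRS code. -/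
def IsNonRS {m : ℕ} (C : Submodule F (Fin (m + 1) → F)) : Prop :=
  (∀ (k' : ℕ) (α v : Fin (m + 1) → F), Function.Injective α → (∀ i, v i ≠ 0) →
      ¬ codeEquiv C (GRS k' α v)) ∧
  (∀ (k' : ℕ) (α v : Fin m → F), Function.Injective α → (∀ i, v i ≠ 0) →
      ¬ codeEquiv C (GRSext k' α v))

/-- Column twisted Reed-Solomon code. -/
def CTRS (k : ℕ) {m : ℕ} (α : Fin m → F) (b c lam : F) : Submodule F (Fin (m + 1) → F) :=
  Submodule.span F
    { w | ∃ f ∈ Polynomial.degreeLT F k,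
        w = Fin.snoc (fun i => Polynomial.eval (α i) f)
              (Polynomial.eval b f - lam * Polynomial.eval c f) }

/-- Extended column twisted Reed-Solomon code. -/
def CTRSext (k : ℕ) {m : ℕ} (α : Fin m → F) (b c lam : F) : Submodule F (Fin (m + 2) → F) :=
  Submodule.span F
    { w | ∃ f ∈ Polynomial.degreeLT F k,
        w = Fin.snoc (Fin.snoc (fun i => Polynomial.eval (α i) f)
              (Polynomial.eval b f - lam * Polynomial.eval c f)) (f.coeff (k - 1)) }

/-- `Φ_J(x) = ∏_{j∈J}(x−α_j)·(1 + (−1)^{|J|} η x ∏_{j∈J} α_j)`. -/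
def PhiRC {m : ℕ} (α : Fin m → F) (η : F) (J : Finset (Fin m)) (x : F) : F :=
  (∏ j ∈ J, (x - α j)) * (1 + (-1 : F) ^ J.card * η * x * ∏ j ∈ J, α j)

/-- `Ψ_J(x) = ∏_{j∈J}(x−α_j)·(1 + ηx + η Σ_{j∈J} α_j)`. -/
def PsiRC {m : ℕ} (α : Fin m → F) (η : F) (J : Finset (Fin m)) (x : F) : F :=
  (∏ j ∈ J, (x - α j)) * (1 + η * x + η * ∑ j ∈ J, α j)

/-- `Φ_{J,h}(x) = ∏_{j∈J}(x−α_j)·(1 + (−1)^{k−1−h} η σ_{k−h}(α_J, x))`. -/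
def PhiRCh {m : ℕ} (α : Fin m → F) (η : F) (k h : ℕ) (J : Finset (Fin m)) (x : F) : F :=
  (∏ j ∈ J, (x - α j)) *
    (1 + (-1 : F) ^ (k - 1 - h) * η * Multiset.esymm (x ::ₘ J.val.map α) (k - h))

/-- The image of a subgroup of `Fˣ` in `F`. -/
def unitsImage (G : Subgroup Fˣ) : Set F := (fun g : Fˣ => (g : F)) '' (G : Set Fˣ)

end

namespace Stmt17Aux

open Polynomial Finset

variable {F : Type*} [Field F]

/-! ### esymm helpers -/

lemma esymm_cons (x : F) (s : Multiset F) (n : ℕ) :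
    (x ::ₘ s).esymm (n + 1) = s.esymm (n + 1) + x * s.esymm n := by
  simp [Multiset.esymm, Multiset.powersetCard_cons, Multiset.map_map, Function.comp,
    Multiset.sum_map_mul_left]

lemma esymm_big {s : Multiset F} {n : ℕ} (hn : Multiset.card s < n) : s.esymm n = 0 := by
  simp [Multiset.esymm, Multiset.powersetCard_eq_empty _ hn]

lemma prodP_coeff {m : ℕ} (α : Fin m → F) (J : Finset (Fin m)) {j : ℕ} (hj : j ≤ J.card) :
    (∏ i ∈ J, (X - C (α i))).coeff j
      = (-1) ^ (J.card - j) * (J.val.map α).esymm (J.card - j) := by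
  have h1 : (∏ i ∈ J, (X - C (α i))) = ((J.val.map α).map (fun t => X - C t)).prod := by
    rw [Multiset.map_map]; rfl
  rw [h1, Multiset.prod_X_sub_C_coeff]
  · simp
  · simpa using hj

/-! ### twPoly coefficients and range -/

variable {k h : ℕ} {η : F}

lemma twp_eq (f : Fin k → F) (hh : h < k) :
    twPoly k 1 h η f = (∑ i : Fin k, C (f i) * X ^ (i : ℕ)) + C (η * f ⟨h, hh⟩) * X ^ k := by
  have hk : k - 1 + 1 = k := by omega
  rw [twPoly, dif_pos hh, hk]

lemma sum_coeff (f : Fin k → F) (j : ℕ) :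
    (∑ i : Fin k, C (f i) * X ^ (i : ℕ)).coeff j = if hj : j < k then f ⟨j, hj⟩ else 0 := by
  rw [finset_sum_coeff]
  simp only [coeff_C_mul, coeff_X_pow]
  split_ifs with hj
  · rw [Finset.sum_eq_single (⟨j, hj⟩ : Fin k)] <;> simp +contextual [eq_comm, Fin.ext_iff]
  · apply Finset.sum_eq_zero
    intro i _
    have hi := i.isLt
    split_ifs with hji
    · exact absurd hji (by omega)
    · exact mul_zero _

lemma twp_coeff_lt (hh : h < k) (f : Fin k → F) {j : ℕ} (hj : j < k) :
    (twPoly k 1 h η f).coeff j = f ⟨j, hj⟩ := by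
  rw [twp_eq f hh, coeff_add, sum_coeff, dif_pos hj, coeff_C_mul, coeff_X_pow,
    if_neg (by omega), mul_zero, add_zero]

lemma twp_coeff_k (hh : h < k) (f : Fin k → F) :
    (twPoly k 1 h η f).coeff k = η * f ⟨h, hh⟩ := by
  rw [twp_eq f hh, coeff_add, sum_coeff, dif_neg (by omega), coeff_C_mul, coeff_X_pow,
    if_pos rfl, mul_one, zero_add]

lemma twp_coeff_gt (hh : h < k) (f : Fin k → F) {j : ℕ} (hj : k < j) :
    (twPoly k 1 h η f).coeff j = 0 := by
  rw [twp_eq f hh, coeff_add, sum_coeff, dif_neg (by omega), coeff_C_mul, coeff_X_pow,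
    if_neg (by omega), mul_zero, add_zero]

lemma twp_coeff_cond (hh : h < k) (f : Fin k → F) :
    (twPoly k 1 h η f).coeff k = η * (twPoly k 1 h η f).coeff h := by
  rw [twp_coeff_k hh, twp_coeff_lt hh f hh]

lemma twp_natDegree (hh : h < k) (f : Fin k → F) : (twPoly k 1 h η f).natDegree ≤ k := by
  rw [natDegree_le_iff_coeff_eq_zero]
  exact fun j hj => twp_coeff_gt hh f hj

lemma twp_inj (hh : h < k) : Function.Injective (twPoly k 1 h η (F := F)) := by
  intro f g hfg
  funext i
  have h2 := congrArg (fun p => Polynomial.coeff p (i : ℕ)) hfg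
  rw [twp_coeff_lt hh f i.isLt, twp_coeff_lt hh g i.isLt] at h2
  simpa using h2

lemma twp_zero (hh : h < k) : twPoly k 1 h η (0 : Fin k → F) = 0 := by
  rw [twp_eq 0 hh]; simp

lemma twp_ne_zero (hh : h < k) {f : Fin k → F} (hf : f ≠ 0) : twPoly k 1 h η f ≠ 0 := by
  intro h0
  exact hf (twp_inj hh (by rw [h0, twp_zero hh]))

lemma twp_range (hh : h < k) {g : F[X]} (hd : g.natDegree ≤ k) (hc : g.coeff k = η * g.coeff h) :
    ∃ f : Fin k → F, twPoly k 1 h η f = g := by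
  refine ⟨fun i => g.coeff i, ?_⟩
  ext j
  rcases lt_trichotomy j k with hj | rfl | hj
  · rw [twp_coeff_lt hh _ hj]
  · rw [twp_coeff_k hh, ← hc]
  · rw [twp_coeff_gt hh _ hj, eq_comm]
    exact coeff_eq_zero_of_natDegree_lt (lt_of_le_of_lt hd hj)

/-! ### linearity and the evaluation map -/

lemma twp_add (f g : Fin k → F) :
    twPoly k 1 h η (f + g) = twPoly k 1 h η f + twPoly k 1 h η g := by
  simp only [twPoly, Pi.add_apply]
  split_ifs
  · simp only [mul_add, C_add, add_mul, Finset.sum_add_distrib]; ring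
  · simp only [mul_zero, C_0, zero_mul, add_zero, C_add, add_mul, Finset.sum_add_distrib]

lemma twp_smul (a : F) (f : Fin k → F) :
    twPoly k 1 h η (a • f) = C a * twPoly k 1 h η f := by
  simp only [twPoly, Pi.smul_apply, smul_eq_mul]
  split_ifs
  · simp only [C_mul, mul_add, Finset.mul_sum, mul_assoc, mul_left_comm (C a)]
  · simp only [mul_zero, C_0, zero_mul, add_zero, mul_add, Finset.mul_sum, mul_assoc, C_mul]

/-- the evaluation map as a linear map -/
noncomputable def Emap (k h : ℕ) (η : F) {m : ℕ} (α : Fin m → F) (b c lam : F) :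
    (Fin k → F) →ₗ[F] (Fin (m + 1) → F) where
  toFun f := Fin.snoc (fun i => (twPoly k 1 h η f).eval (α i))
      ((twPoly k 1 h η f).eval b - lam * (twPoly k 1 h η f).eval c)
  map_add' f g := by
    funext j
    rcases Fin.eq_castSucc_or_eq_last j with ⟨j', rfl⟩ | rfl
    · simp [twp_add]
    · simp [twp_add]; ring
  map_smul' a f := by
    funext j
    rcases Fin.eq_castSucc_or_eq_last j with ⟨j', rfl⟩ | rfl
    · simp [twp_smul]
    · simp [twp_smul]; ring

variable {m : ℕ} {α : Fin m → F} {b c lam : F}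

lemma Emap_castSucc (f : Fin k → F) (i : Fin m) :
    Emap k h η α b c lam f (Fin.castSucc i) = (twPoly k 1 h η f).eval (α i) := by
  simp [Emap]

lemma Emap_last (f : Fin k → F) :
    Emap k h η α b c lam f (Fin.last m)
      = (twPoly k 1 h η f).eval b - lam * (twPoly k 1 h η f).eval c := by
  simp [Emap]

open Classical in
lemma wt_add_card {n : ℕ} (x : Fin n → F) :
    wt x + (univ.filter (fun i => x i = 0)).card = n := by
  rw [wt, Nat.card_eq_fintype_card, Fintype.card_subtype]
  have h1 := Finset.card_filter_add_card_filter_not (s := (univ : Finset (Fin n)))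
    (p := fun i => x i ≠ 0)
  simp only [ne_eq, not_not, Finset.card_univ, Fintype.card_fin] at h1
  simp only [ne_eq]
  convert h1 using 3

lemma rctrs_eq_range : RCTRS k 1 h η α b c lam = LinearMap.range (Emap k h η α b c lam) := by
  have hws : rctrsWords k 1 h η α b c lam = Set.range (Emap k h η α b c lam) := by
    ext w
    simp only [rctrsWords, Set.mem_setOf_eq, Set.mem_range, Emap, LinearMap.coe_mk,
      AddHom.coe_mk]
    exact exists_congr fun f => eq_comm
  rw [RCTRS, hws]
  apply le_antisymm
  · rw [Submodule.span_le]
    rintro w ⟨f, rfl⟩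
    exact LinearMap.mem_range_self _ f
  · rintro w ⟨f, rfl⟩
    exact Submodule.subset_span ⟨f, rfl⟩

open Classical in
lemma isMDS_iff (hkn : k ≤ m + 1) :
    IsMDS (RCTRS k 1 h η α b c lam) k ↔
      ∀ f : Fin k → F, f ≠ 0 →
        (univ.filter (fun i => Emap k h η α b c lam f i = 0)).card < k := by
  rw [rctrs_eq_range]
  set E := Emap (F := F) k h η α b c lam with hE
  constructor
  · rintro ⟨hrank, hdist⟩ f hf
    have hinj : Function.Injective E := by
      rw [← LinearMap.ker_eq_bot]
      have h1 := E.finrank_range_add_finrank_ker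
      rw [hrank] at h1
      simp only [Module.finrank_fin_fun] at h1
      have h2 : Module.finrank F (LinearMap.ker E) = 0 := by omega
      exact Submodule.finrank_eq_zero.mp h2
    have hne : E f ≠ 0 := fun h0 => hf (hinj (by rw [h0, map_zero]))
    have hw := hdist (E f) (LinearMap.mem_range_self _ f) hne
    have := wt_add_card (E f)
    omega
  · intro hcond
    have hinj : Function.Injective E := by
      rw [← LinearMap.ker_eq_bot, Submodule.eq_bot_iff]
      intro f hf0
      by_contra hf
      have := hcond f hf
      have hall : (univ.filter (fun i => E f i = 0)).card = m + 1 := by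
        rw [LinearMap.mem_ker] at hf0
        rw [hf0]
        simp [Finset.card_univ]
      omega
    constructor
    · have h1 := E.finrank_range_add_finrank_ker
      rw [LinearMap.ker_eq_bot.mpr hinj, finrank_bot] at h1
      simp only [Module.finrank_fin_fun] at h1
      omega
    · rintro x ⟨f, rfl⟩ hne
      have hf : f ≠ 0 := fun h0 => hne (by rw [h0, map_zero])
      have h1 := hcond f hf
      have h2 := wt_add_card (E f)
      omega

end Stmt17Aux
namespace Stmt17Aux

open Polynomial Finset

variable {F : Type*} [Field F] {k h : ℕ} {η : F} {m : ℕ} {α : Fin m → F} {b c lam : F}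

/-! ### the product polynomial and linear-factor analysis -/

noncomputable def Pp (α : Fin m → F) (J : Finset (Fin m)) : F[X] := ∏ j ∈ J, (X - C (α j))

lemma Pp_monic (α : Fin m → F) (J : Finset (Fin m)) : (Pp α J).Monic :=
  monic_prod_of_monic _ _ fun j _ => monic_X_sub_C _

lemma Pp_natDegree (α : Fin m → F) (J : Finset (Fin m)) : (Pp α J).natDegree = J.card := by
  rw [Pp, natDegree_prod _ _ (fun j _ => X_sub_C_ne_zero _)]
  simp [natDegree_X_sub_C]

lemma Pp_coeff_top (α : Fin m → F) (J : Finset (Fin m)) : (Pp α J).coeff J.card = 1 := by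
  have := (Pp_monic α J).coeff_natDegree
  rwa [Pp_natDegree] at this

lemma Pp_eval (α : Fin m → F) (J : Finset (Fin m)) (x : F) :
    (Pp α J).eval x = ∏ j ∈ J, (x - α j) := by
  simp [Pp, eval_prod]

lemma Pp_eval_mem (α : Fin m → F) {J : Finset (Fin m)} {j : Fin m} (hj : j ∈ J) :
    (Pp α J).eval (α j) = 0 := by
  rw [Pp_eval]
  exact Finset.prod_eq_zero hj (sub_self _)

noncomputable def Qp (α : Fin m → F) (J : Finset (Fin m)) (u v : F) : F[X] :=
  Pp α J * (C u + C v * X)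

lemma Qp_eval (α : Fin m → F) (J : Finset (Fin m)) (u v x : F) :
    (Qp α J u v).eval x = (∏ j ∈ J, (x - α j)) * (u + v * x) := by
  simp [Qp, Pp, eval_prod]

lemma Qp_decomp (α : Fin m → F) (J : Finset (Fin m)) (u v : F) :
    Qp α J u v = Pp α J * C u + Pp α J * X * C v := by
  rw [Qp]; ring

lemma Qp_natDegree {J : Finset (Fin m)} (hk : 1 ≤ k) (hJ : J.card = k - 1) (u v : F) :
    (Qp α J u v).natDegree ≤ k := by
  refine le_trans (natDegree_mul_le) ?_
  rw [Pp_natDegree, hJ]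
  have h2 : (C u + C v * X).natDegree ≤ 1 := by
    refine le_trans (natDegree_add_le _ _) ?_
    simp only [natDegree_C, max_le_iff]
    exact ⟨by omega, le_trans (natDegree_mul_le) (by simp [natDegree_C])⟩
  omega

lemma Qp_eq_zero_iff (α : Fin m → F) (J : Finset (Fin m)) (u v : F) :
    Qp α J u v = 0 ↔ u = 0 ∧ v = 0 := by
  constructor
  · intro h0
    rcases mul_eq_zero.mp h0 with hP | hq
    · exact absurd hP (Pp_monic α J).ne_zero
    · constructor
      · have := congrArg (fun p => Polynomial.coeff p 0) hq; simpa using this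
      · have := congrArg (fun p => Polynomial.coeff p 1) hq
        simpa [coeff_C] using this
  · rintro ⟨rfl, rfl⟩; simp [Qp]

lemma Qp_coeff_k {J : Finset (Fin m)} (hk : 1 ≤ k) (hJ : J.card = k - 1) (u v : F) :
    (Qp α J u v).coeff k = v := by
  rw [Qp_decomp, coeff_add, coeff_mul_C, coeff_mul_C]
  have h1 : (Pp α J).coeff k = 0 := by
    apply coeff_eq_zero_of_natDegree_lt
    rw [Pp_natDegree, hJ]; omega
  have hk2 : k = (k - 1) + 1 := by omega
  rw [h1, hk2, coeff_mul_X, ← hJ, Pp_coeff_top]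
  ring

/-! ### the Φ coefficients -/

noncomputable def uPhi (α : Fin m → F) (η : F) (k h : ℕ) (J : Finset (Fin m)) : F :=
  1 + (-1 : F) ^ (k - 1 - h) * η * (J.val.map α).esymm (k - h)

noncomputable def vPhi (α : Fin m → F) (η : F) (k h : ℕ) (J : Finset (Fin m)) : F :=
  (-1 : F) ^ (k - 1 - h) * η * (J.val.map α).esymm (k - h - 1)

lemma Phi_eval (hh : h < k) (J : Finset (Fin m)) (x : F) :
    PhiRCh α η k h J x = (∏ j ∈ J, (x - α j)) * (uPhi α η k h J + vPhi α η k h J * x) := by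
  rw [PhiRCh, show k - h = (k - h - 1) + 1 from by omega, esymm_cons,
    show (k - h - 1) + 1 = k - h from by omega]
  simp only [uPhi, vPhi]
  ring

lemma constraint_iff (hh : h < k) {J : Finset (Fin m)} (hJ : J.card = k - 1) (u v : F) :
    (Qp α J u v).coeff k = η * (Qp α J u v).coeff h
      ↔ v * uPhi α η k h J = u * vPhi α η k h J := by
  have hk1 : 1 ≤ k := by omega
  rw [Qp_coeff_k hk1 hJ u v, Qp_decomp, coeff_add, coeff_mul_C, coeff_mul_C]
  have hPh : (Pp α J).coeff h = (-1 : F) ^ (k - 1 - h) * (J.val.map α).esymm (k - 1 - h) := by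
    have h2 := prodP_coeff α J (j := h) (by omega)
    rw [hJ] at h2
    rw [Pp]; exact h2
  rcases Nat.eq_zero_or_pos h with rfl | hpos
  · rw [coeff_mul_X_zero, hPh]
    have hA : (J.val.map α).esymm k = 0 := by
      apply esymm_big
      simp only [Multiset.card_map]
      rw [show Multiset.card J.val = J.card from rfl, hJ]
      omega
    simp only [uPhi, vPhi, hA, Nat.sub_zero]
    constructor <;> intro hx <;> linear_combination hx
  · obtain ⟨h', rfl⟩ : ∃ h', h = h' + 1 := ⟨h - 1, by omega⟩
    rw [coeff_mul_X, hPh]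
    have hPh' : (Pp α J).coeff h' = (-1 : F) ^ (k - h' - 1) * (J.val.map α).esymm (k - h' - 1) := by
      have h2 := prodP_coeff α J (j := h') (by omega)
      rw [hJ] at h2
      rw [show k - 1 - h' = k - h' - 1 from by omega] at h2
      rw [Pp]; exact h2
    rw [hPh']
    simp only [uPhi, vPhi]
    rw [show k - 1 - (h' + 1) = k - h' - 2 from by omega,
      show k - (h' + 1) - 1 = k - h' - 2 from by omega,
      show k - (h' + 1) = k - h' - 1 from by omega,
      show (-1 : F) ^ (k - h' - 1) = -(-1 : F) ^ (k - h' - 2) from by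
        rw [show k - h' - 1 = (k - h' - 2) + 1 from by omega, pow_succ]; ring]
    constructor <;> intro hx <;> linear_combination hx

lemma twist_eq (α : Fin m → F) (J : Finset (Fin m)) (u v : F) :
    (Qp α J u v).eval b - lam * (Qp α J u v).eval c
      = u * ((∏ j ∈ J, (b - α j)) - lam * ∏ j ∈ J, (c - α j))
        + v * (b * ∏ j ∈ J, (b - α j) - lam * (c * ∏ j ∈ J, (c - α j))) := by
  rw [Qp_eval, Qp_eval]; ring

lemma key_lin {u v uP vP A0 B0 : F} (huv : ¬(u = 0 ∧ v = 0))
    (hcon : v * uP = u * vP) (htw : u * A0 + v * B0 = 0) : uP * A0 + vP * B0 = 0 := by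
  rcases not_and_or.mp huv with hu | hv
  · have h1 : u * (uP * A0 + vP * B0) = uP * (u * A0 + v * B0) := by
      linear_combination (-B0) * hcon
    rw [htw, mul_zero] at h1
    exact (mul_eq_zero.mp h1).resolve_left hu
  · have h1 : v * (uP * A0 + vP * B0) = vP * (u * A0 + v * B0) := by
      linear_combination A0 * hcon
    rw [htw, mul_zero] at h1
    exact (mul_eq_zero.mp h1).resolve_left hv

lemma vanish_dvd (hα : Function.Injective α) {g : F[X]} (hg : g ≠ 0) {J : Finset (Fin m)}
    (hev : ∀ j ∈ J, g.eval (α j) = 0) : Pp α J ∣ g := by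
  have hP : Pp α J = ((J.val.map α).map (fun t => X - C t)).prod := by
    rw [Multiset.map_map]; rfl
  rw [hP, Multiset.prod_X_sub_C_dvd_iff_le_roots hg]
  rw [Multiset.le_iff_subset (J.nodup.map hα)]
  intro x hx
  obtain ⟨j, hj, rfl⟩ := Multiset.mem_map.mp hx
  rw [mem_roots hg]
  exact hev j hj

/-! ### the two existence criteria -/

lemma construct2 (hh : h < k) {J : Finset (Fin m)} (hJ : J.card = k - 1) {u v : F}
    (huv : ¬(u = 0 ∧ v = 0))
    (hcon : v * uPhi α η k h J = u * vPhi α η k h J)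
    (htw : u * ((∏ j ∈ J, (b - α j)) - lam * ∏ j ∈ J, (c - α j))
        + v * (b * ∏ j ∈ J, (b - α j) - lam * (c * ∏ j ∈ J, (c - α j))) = 0) :
    ∃ f : Fin k → F, f ≠ 0 ∧ (∀ j ∈ J, (twPoly k 1 h η f).eval (α j) = 0) ∧
      (twPoly k 1 h η f).eval b - lam * (twPoly k 1 h η f).eval c = 0 := by
  obtain ⟨f, hf⟩ := twp_range hh (Qp_natDegree (by omega) hJ u v)
    ((constraint_iff hh hJ u v).mpr hcon)
  refine ⟨f, ?_, ?_, ?_⟩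
  · rintro rfl
    rw [twp_zero hh] at hf
    exact huv ((Qp_eq_zero_iff α J u v).mp hf.symm)
  · intro j hj
    rw [hf, Qp_eval]
    have hz : (∏ j1 ∈ J, (α j - α j1)) = 0 := Finset.prod_eq_zero hj (sub_self (α j))
    rw [hz, zero_mul]
  · rw [hf, twist_eq]
    exact htw

lemma case2_iff (hh : h < k) (hα : Function.Injective α) {J : Finset (Fin m)}
    (hJ : J.card = k - 1) :
    (∃ f : Fin k → F, f ≠ 0 ∧ (∀ j ∈ J, (twPoly k 1 h η f).eval (α j) = 0) ∧
        (twPoly k 1 h η f).eval b - lam * (twPoly k 1 h η f).eval c = 0)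
      ↔ PhiRCh α η k h J b = lam * PhiRCh α η k h J c := by
  have hPhi : PhiRCh α η k h J b - lam * PhiRCh α η k h J c
      = uPhi α η k h J * ((∏ j ∈ J, (b - α j)) - lam * ∏ j ∈ J, (c - α j))
        + vPhi α η k h J * (b * ∏ j ∈ J, (b - α j) - lam * (c * ∏ j ∈ J, (c - α j))) := by
    rw [Phi_eval hh, Phi_eval hh]; ring
  constructor
  · rintro ⟨f, hf, hvan, htw⟩
    have hgne : twPoly k 1 h η f ≠ 0 := twp_ne_zero hh hf
    obtain ⟨q, hq⟩ := vanish_dvd hα hgne hvan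
    have hqne : q ≠ 0 := by rintro rfl; rw [mul_zero] at hq; exact hgne hq
    have hdq : q.natDegree ≤ 1 := by
      have hd := twp_natDegree hh (η := η) f
      rw [hq, natDegree_mul (Pp_monic α J).ne_zero hqne, Pp_natDegree, hJ] at hd
      omega
    obtain ⟨v, u, hqeq⟩ : ∃ v u, q = C v * X + C u :=
      ⟨_, _, eq_X_add_C_of_natDegree_le_one hdq⟩
    have hgQ : twPoly k 1 h η f = Qp α J u v := by
      rw [hq, hqeq, Qp]; ring
    have huv : ¬(u = 0 ∧ v = 0) := by
      rintro ⟨hu, hv⟩; apply hqne; rw [hqeq, hu, hv]; simp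
    have hcon : v * uPhi α η k h J = u * vPhi α η k h J := by
      rw [← constraint_iff hh hJ, ← hgQ]
      exact twp_coeff_cond hh f
    have htww : u * ((∏ j ∈ J, (b - α j)) - lam * ∏ j ∈ J, (c - α j))
        + v * (b * ∏ j ∈ J, (b - α j) - lam * (c * ∏ j ∈ J, (c - α j))) = 0 := by
      rw [← twist_eq, ← hgQ]
      exact htw
    have hkey := key_lin huv hcon htww
    rw [← hPhi] at hkey
    linear_combination hkey
  · intro hPhiEq
    have hkey : uPhi α η k h J * ((∏ j ∈ J, (b - α j)) - lam * ∏ j ∈ J, (c - α j))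
        + vPhi α η k h J * (b * ∏ j ∈ J, (b - α j) - lam * (c * ∏ j ∈ J, (c - α j))) = 0 := by
      rw [← hPhi, hPhiEq]; ring
    by_cases hz : uPhi α η k h J = 0 ∧ vPhi α η k h J = 0
    · obtain ⟨hu0, hv0⟩ := hz
      by_cases hA : ((∏ j ∈ J, (b - α j)) - lam * ∏ j ∈ J, (c - α j)) = 0
      · exact construct2 hh hJ (u := 1) (v := 0) (by simp)
          (by rw [hu0, hv0]; ring) (by rw [hA]; ring)
      · exact construct2 hh hJ
          (u := b * ∏ j ∈ J, (b - α j) - lam * (c * ∏ j ∈ J, (c - α j)))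
          (v := -((∏ j ∈ J, (b - α j)) - lam * ∏ j ∈ J, (c - α j)))
          (by rintro ⟨-, hv⟩; exact hA (neg_eq_zero.mp hv))
          (by rw [hu0, hv0]; ring) (by ring)
    · exact construct2 hh hJ hz (mul_comm _ _) hkey

lemma case1_iff (hh : h < k) (hα : Function.Injective α) {I : Finset (Fin m)}
    (hI : I.card = k) :
    (∃ f : Fin k → F, f ≠ 0 ∧ ∀ i ∈ I, (twPoly k 1 h η f).eval (α i) = 0)
      ↔ (-1 : F) ^ (k - h) * η * (I.val.map α).esymm (k - h) = 1 := by
  classical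
  have hIcoeff : (Pp α I).coeff h = (-1 : F) ^ (k - h) * (I.val.map α).esymm (k - h) := by
    have h2 := prodP_coeff α I (j := h) (by omega)
    rw [hI] at h2
    rw [Pp]; exact h2
  have hItop : (Pp α I).coeff k = 1 := by rw [← hI]; exact Pp_coeff_top α I
  constructor
  · rintro ⟨f, hf, hvan⟩
    set g := twPoly k 1 h η f with hg
    have hgne : g ≠ 0 := twp_ne_zero hh hf
    have hD : g = C (g.coeff k) * Pp α I := by
      set D := g - C (g.coeff k) * Pp α I with hDdef
      have hDcoeff : D.coeff k = 0 := by
        rw [hDdef, coeff_sub, coeff_C_mul, hItop, mul_one, sub_self]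
      have hle : D.natDegree ≤ k := by
        refine le_trans (natDegree_sub_le _ _) (max_le (twp_natDegree hh f) ?_)
        refine le_trans (natDegree_C_mul_le _ _) ?_
        rw [Pp_natDegree, hI]
      by_cases hD0 : D = 0
      · rw [← sub_eq_zero]; exact hD0
      · exfalso
        have hlt : D.natDegree < k := by
          rcases lt_or_eq_of_le hle with hx | hx
          · exact hx
          · exact absurd (leadingCoeff_eq_zero.mp (by rw [leadingCoeff, hx, hDcoeff])) hD0
        apply hD0
        apply eq_zero_of_natDegree_lt_card_of_eval_eq_zero' D (I.image α)
        · intro x hx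
          obtain ⟨i, hi, rfl⟩ := Finset.mem_image.mp hx
          rw [hDdef]
          simp only [eval_sub, eval_mul, eval_C]
          rw [hvan i hi, Pp_eval_mem α hi, mul_zero, sub_zero]
        · rwa [Finset.card_image_of_injective I hα, hI]
    have hgkne : g.coeff k ≠ 0 := by
      intro h0
      rw [h0, C_0, zero_mul] at hD
      exact hgne hD
    have hch : g.coeff h = g.coeff k * ((-1 : F) ^ (k - h) * (I.val.map α).esymm (k - h)) := by
      conv_lhs => rw [hD]
      rw [coeff_C_mul, hIcoeff]
    have hcond := twp_coeff_cond (η := η) hh f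
    rw [← hg] at hcond
    rw [hch] at hcond
    have := mul_left_cancel₀ hgkne (show g.coeff k * 1
      = g.coeff k * ((-1 : F) ^ (k - h) * η * (I.val.map α).esymm (k - h)) by
        rw [mul_one]; linear_combination hcond)
    linear_combination -this
  · intro hcond
    have hQdeg : (Pp α I).natDegree ≤ k := by rw [Pp_natDegree, hI]
    have hcoef : (Pp α I).coeff k = η * (Pp α I).coeff h := by
      rw [hItop, hIcoeff]
      linear_combination -hcond
    obtain ⟨f, hf⟩ := twp_range hh hQdeg hcoef
    refine ⟨f, ?_, ?_⟩
    · rintro rfl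
      rw [twp_zero hh] at hf
      exact (Pp_monic α I).ne_zero hf.symm
    · intro i hi
      rw [hf]
      exact Pp_eval_mem α hi

end Stmt17Aux
open Polynomial Finset Stmt17Aux

theorem stmt17 {F : Type*} [Field F] [Fintype F] {m k h : ℕ}
    (hh : h < k) (hkn : k ≤ m + 1) (hq : m ≤ Fintype.card F)
    (α : Fin m → F) (hα : Function.Injective α) (b c lam η : F) :
    IsMDS (RCTRS k 1 h η α b c lam) k ↔
      ((∀ I : Finset (Fin m), I.card = k →
          (-1 : F) ^ (k - h) * η * Multiset.esymm (I.val.map α) (k - h) ≠ 1) ∧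
       (∀ J : Finset (Fin m), J.card = k - 1 →
          PhiRCh α η k h J b ≠ lam * PhiRCh α η k h J c)) := by
  classical
  rw [Stmt17Aux.isMDS_iff hkn]
  constructor
  · intro hmds
    constructor
    · intro I hI hbad
      obtain ⟨f, hf, hvan⟩ := (case1_iff hh hα hI).mpr hbad
      have hsub : I.image Fin.castSucc ⊆
          univ.filter (fun i => Emap k h η α b c lam f i = 0) := by
        intro z hz
        obtain ⟨i, hi, rfl⟩ := Finset.mem_image.mp hz
        rw [Finset.mem_filter]
        exact ⟨Finset.mem_univ _, by rw [Emap_castSucc]; exact hvan i hi⟩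
      have hcard := Finset.card_le_card hsub
      rw [Finset.card_image_of_injective I (Fin.castSucc_injective m), hI] at hcard
      have := hmds f hf
      omega
    · intro J hJ hbad
      obtain ⟨f, hf, hvan, htw⟩ := (case2_iff hh hα hJ).mpr hbad
      have hsub : insert (Fin.last m) (J.image Fin.castSucc) ⊆
          univ.filter (fun i => Emap k h η α b c lam f i = 0) := by
        intro z hz
        rw [Finset.mem_filter]
        refine ⟨Finset.mem_univ _, ?_⟩
        rcases Finset.mem_insert.mp hz with rfl | hz
        · rw [Emap_last]; exact htw
        · obtain ⟨i, hi, rfl⟩ := Finset.mem_image.mp hz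
          rw [Emap_castSucc]; exact hvan i hi
      have hcard := Finset.card_le_card hsub
      have hnotin : Fin.last m ∉ J.image Fin.castSucc := by
        intro hmem
        obtain ⟨i, -, hi⟩ := Finset.mem_image.mp hmem
        exact absurd hi (Fin.castSucc_lt_last i).ne
      rw [Finset.card_insert_of_notMem hnotin,
        Finset.card_image_of_injective J (Fin.castSucc_injective m), hJ] at hcard
      have := hmds f hf
      omega
  · rintro ⟨hi, hii⟩ f hf
    by_contra hge
    push_neg at hge
    set Ze := univ.filter (fun i : Fin m => (twPoly k 1 h η f).eval (α i) = 0) with hZe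
    have hZsub : univ.filter (fun i => Emap k h η α b c lam f i = 0)
        ⊆ insert (Fin.last m) (Ze.image Fin.castSucc) := by
      intro z hz
      rcases Fin.eq_castSucc_or_eq_last z with ⟨i, rfl⟩ | rfl
      · refine Finset.mem_insert_of_mem (Finset.mem_image.mpr ⟨i, ?_, rfl⟩)
        rw [hZe, Finset.mem_filter]
        refine ⟨Finset.mem_univ _, ?_⟩
        have := (Finset.mem_filter.mp hz).2
        rwa [Emap_castSucc] at this
      · exact Finset.mem_insert_self _ _
    have hZle : (univ.filter (fun i => Emap k h η α b c lam f i = 0)).card ≤ Ze.card + 1 := by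
      refine le_trans (Finset.card_le_card hZsub) ?_
      refine le_trans (Finset.card_insert_le _ _) ?_
      have := Finset.card_image_le (s := Ze) (f := Fin.castSucc)
      omega
    by_cases hcase : k ≤ Ze.card
    · obtain ⟨I, hIsub, hIcard⟩ := Finset.exists_subset_card_eq hcase
      refine hi I hIcard ((case1_iff hh hα hIcard).mp ⟨f, hf, fun i hiI => ?_⟩)
      have := hIsub hiI
      rw [hZe, Finset.mem_filter] at this
      exact this.2
    · have hZecard : Ze.card = k - 1 := by omega
      have hlast : Fin.last m ∈ univ.filter (fun i => Emap k h η α b c lam f i = 0) := by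
        by_contra hl
        have hsub2 : univ.filter (fun i => Emap k h η α b c lam f i = 0)
            ⊆ Ze.image Fin.castSucc := by
          intro z hz
          rcases Finset.mem_insert.mp (hZsub hz) with rfl | hz2
          · exact absurd hz hl
          · exact hz2
        have h1 := Finset.card_le_card hsub2
        have h2 := Finset.card_image_le (s := Ze) (f := Fin.castSucc)
        omega
      have htw : (twPoly k 1 h η f).eval b - lam * (twPoly k 1 h η f).eval c = 0 := by
        have := (Finset.mem_filter.mp hlast).2
        rwa [Emap_last] at this
      refine hii Ze hZecard ((case2_iff hh hα hZecard).mp ⟨f, hf, fun j hj => ?_, htw⟩)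
      rw [hZe, Finset.mem_filter] at hj
      exact hj.2
end

section
/- Let F_{q0} be a subfield of the finite field F_q, let G = {1, μ_1, …, μ_{n−1}} be a subgroup of F_{q0}^* of order n, let b,c ∈ F_{q0} with b ≠ c, and set α_i = (b − μ_i c)/(1 − μ_i) for i = 1,…,n−1. If 0 ≤ h < k ≤ n, λ ∈ F_{q0} \ G and η ∈ F_q \ F_{q0}^*, then the code RCTRS_{h,1}(α,b,c,λ,η) is MDS with parameters [n, k, n−k+1]. -/
open Polynomial Finset

open Polynomial Finset

namespace RCaux
variable {F : Type*} [Field F]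

lemma aux_vanish (p : F[X]) (s : Finset F) (hdeg : p.degree < s.card)
    (hev : ∀ x ∈ s, p.eval x = 0) : p = 0 := by
  by_cases hp : p = 0
  · exact hp
  · exact p.eq_zero_of_natDegree_lt_card_of_eval_eq_zero' s hev
      ((natDegree_lt_iff_degree_lt hp).2 hdeg)

lemma coeff_prod_mem (K₀ : Subfield F) {ι : Type*} (s : Finset ι) (a : ι → F)
    (ha : ∀ j ∈ s, a j ∈ K₀) (n : ℕ) : (∏ j ∈ s, (X - C (a j))).coeff n ∈ K₀ := by
  have : (∏ j ∈ s, (X - C (a j)))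
      = (∏ j ∈ s.attach, (X - C (⟨a j.1, ha j.1 j.2⟩ : K₀))).map K₀.subtype := by
    rw [Polynomial.map_prod, ← Finset.prod_attach s (fun j => (X - C (a j)))]
    refine Finset.prod_congr rfl fun j _ => ?_
    simp
  rw [this, coeff_map]
  exact ((∏ j ∈ s.attach, (X - C (⟨a j.1, ha j.1 j.2⟩ : K₀))).coeff n).2

lemma sum_coeff (k : ℕ) (f : Fin k → F) (j : ℕ) :
    (∑ i : Fin k, C (f i) * X ^ (i : ℕ)).coeff j = if hj : j < k then f ⟨j, hj⟩ else 0 := by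
  rw [finset_sum_coeff]
  simp only [coeff_C_mul, coeff_X_pow, mul_ite, mul_one, mul_zero]
  split
  · case isTrue hj =>
      rw [Finset.sum_eq_single (⟨j, hj⟩ : Fin k)]
      · simp
      · intro i _ hi
        rw [if_neg]
        intro hji
        exact hi (by simp [Fin.ext_iff, ← hji])
      · simp
  · case isFalse hj =>
      refine Finset.sum_eq_zero fun i _ => ?_
      rw [if_neg]
      intro hji
      exact hj (hji ▸ i.isLt)

lemma twPoly_coeff {k h : ℕ} (hh : h < k) (η : F) (f : Fin k → F) (j : ℕ) :
    (twPoly k 1 h η f).coeff j =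
      (if hj : j < k then f ⟨j, hj⟩ else 0) + (if j = k then η * f ⟨h, hh⟩ else 0) := by
  unfold twPoly
  rw [Nat.sub_add_cancel (by omega : 1 ≤ k), dif_pos hh, coeff_add, sum_coeff]
  congr 1
  simp [mul_assoc, coeff_C_mul, coeff_X_pow, mul_ite]

end RCaux

namespace RCaux
variable {F : Type*} [Field F]

lemma twPoly_degree_le {k h : ℕ} (hh : h < k) (η : F) (f : Fin k → F) :
    (twPoly k 1 h η f).degree ≤ (k : ℕ) := by
  rw [degree_le_iff_coeff_zero]
  intro j hj
  rw [Nat.cast_lt] at hj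
  rw [twPoly_coeff hh, dif_neg (by omega), if_neg (by omega), add_zero]

lemma f_eq_zero_of_twPoly_eq_zero {k h : ℕ} (hh : h < k) (η : F) (f : Fin k → F)
    (hg : twPoly k 1 h η f = 0) : f = 0 := by
  funext i
  have h2 := congrArg (fun p => p.coeff (i : ℕ)) hg
  simp only [coeff_zero] at h2
  rw [twPoly_coeff hh, dif_pos i.isLt, if_neg (by omega), add_zero] at h2
  simpa using h2

lemma caseA (K₀ : Subfield F) {m k h : ℕ} (hh : h < k) (α : Fin m → F) (η : F)
    (hη : η = 0 ∨ η ∉ K₀) (J : Finset (Fin m)) (hJcard : J.card = k)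
    (hαK : ∀ j ∈ J, α j ∈ K₀) (hinj : Set.InjOn α J)
    (f : Fin k → F) (hroots : ∀ j ∈ J, (twPoly k 1 h η f).eval (α j) = 0) : f = 0 := by
  classical
  set g := twPoly k 1 h η f with hg
  set P : F[X] := ∏ j ∈ J, (X - C (α j)) with hP
  have hPmonic : P.Monic := monic_prod_of_monic _ _ (fun j _ => monic_X_sub_C _)
  have hPdeg : P.natDegree = k := by
    rw [hP, natDegree_prod_of_monic _ _ (fun j _ => monic_X_sub_C _)]
    simp [hJcard]
  have himcard : (J.image α).card = k := by rw [Finset.card_image_of_injOn hinj, hJcard]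
  set e : F := η * f ⟨h, hh⟩ with he
  have hgdecomp : g = C e * P := by
    have h0 : g - C e * P = 0 := by
      apply aux_vanish _ (J.image α)
      · rw [himcard, degree_lt_iff_coeff_zero]
        intro j hj
        rw [coeff_sub, hg, twPoly_coeff hh, coeff_C_mul, dif_neg (by omega)]
        rcases eq_or_lt_of_le hj with rfl | hlt
        · rw [if_pos rfl, ← he, zero_add, ← hPdeg, hPmonic.coeff_natDegree, mul_one, sub_self]
        · rw [if_neg (by omega), coeff_eq_zero_of_natDegree_lt (by omega : P.natDegree < j)]
          ring
      · intro x hx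
        obtain ⟨j, hjJ, rfl⟩ := Finset.mem_image.1 hx
        rw [eval_sub, hroots j hjJ, eval_mul, eval_C, hP, eval_prod]
        rw [Finset.prod_eq_zero hjJ (by simp)]
        ring
    have := sub_eq_zero.1 h0
    exact this
  have hcoe : f ⟨h, hh⟩ = e * P.coeff h := by
    have h2 := congrArg (fun p => p.coeff h) hgdecomp
    simp only [coeff_C_mul] at h2
    rw [hg, twPoly_coeff hh, dif_pos hh, if_neg (by omega), add_zero] at h2
    exact h2
  have he0 : e = 0 := by
    rcases hη with rfl | hηK
    · simp [he]
    · by_cases hf : f ⟨h, hh⟩ = 0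
      · simp [he, hf]
      · exfalso
        have hsK : P.coeff h ∈ K₀ := coeff_prod_mem K₀ J α hαK h
        have h1 : (1 : F) = η * P.coeff h :=
          mul_left_cancel₀ hf (by rw [mul_one]; linear_combination hcoe)
        have hs0 : P.coeff h ≠ 0 := by
          intro h0; rw [h0, mul_zero] at h1; exact one_ne_zero h1
        have hηinv : η = (P.coeff h)⁻¹ := eq_inv_of_mul_eq_one_right (by linear_combination -h1)
        exact hηK (hηinv ▸ inv_mem hsK)
  have hg0 : g = 0 := by
    rw [hgdecomp, he0]
    simp
  exact f_eq_zero_of_twPoly_eq_zero hh η f (hg ▸ hg0)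

end RCaux

namespace RCaux
variable {F : Type*} [Field F]

lemma caseB (K₀ : Subfield F) {m k h : ℕ} (hh : h < k) (α : Fin m → F) (η : F)
    (hη : η = 0 ∨ η ∉ K₀) (b c lam : F) (hb : b ∈ K₀) (hc : c ∈ K₀) (hlamK : lam ∈ K₀)
    (J : Finset (Fin m)) (hJcard : J.card = k - 1)
    (hαK : ∀ j ∈ J, α j ∈ K₀) (hinj : Set.InjOn α J)
    (μJ : F) (hμJK : μJ ∈ K₀) (hμJlam : μJ ≠ lam)
    (hprodrel : ∏ j ∈ J, (b - α j) = μJ * ∏ j ∈ J, (c - α j))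
    (hPc : ∏ j ∈ J, (c - α j) ≠ 0)
    (f : Fin k → F) (hroots : ∀ j ∈ J, (twPoly k 1 h η f).eval (α j) = 0)
    (htw : (twPoly k 1 h η f).eval b = lam * (twPoly k 1 h η f).eval c) : f = 0 := by
  classical
  set g := twPoly k 1 h η f with hg
  set P : F[X] := ∏ j ∈ J, (X - C (α j)) with hP
  have hPmonic : P.Monic := monic_prod_of_monic _ _ (fun j _ => monic_X_sub_C _)
  have hPdeg : P.natDegree = k - 1 := by
    rw [hP, natDegree_prod_of_monic _ _ (fun j _ => monic_X_sub_C _)]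
    simp [hJcard]
  have hXPmonic : (X * P).Monic := monic_X.mul hPmonic
  have hXPdeg : (X * P).natDegree = k := by
    rw [monic_X.natDegree_mul hPmonic, natDegree_X, hPdeg]
    omega
  have himcard : (J.image α).card = k - 1 := by rw [Finset.card_image_of_injOn hinj, hJcard]
  have hPev : ∀ x : F, P.eval x = ∏ j ∈ J, (x - α j) := by
    intro x; rw [hP, eval_prod]; simp
  set v : F := η * f ⟨h, hh⟩ with hv
  set g' : F[X] := g - C v * (X * P) with hg'
  have hg'coeff : ∀ j : ℕ, k ≤ j → g'.coeff j = 0 := by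
    intro j hj
    rw [hg', coeff_sub, hg, twPoly_coeff hh, coeff_C_mul, dif_neg (by omega)]
    rcases eq_or_lt_of_le hj with rfl | hlt
    · rw [if_pos rfl, ← hv, zero_add, ← hXPdeg, hXPmonic.coeff_natDegree, mul_one, sub_self]
    · rw [if_neg (by omega), coeff_eq_zero_of_natDegree_lt (by omega : (X * P).natDegree < j)]
      ring
  have hg'roots : ∀ j ∈ J, g'.eval (α j) = 0 := by
    intro j hjJ
    rw [hg', eval_sub, hroots j hjJ, eval_mul, eval_mul, eval_C, eval_X, hP, eval_prod]
    rw [Finset.prod_eq_zero hjJ (by simp)]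
    ring
  set u : F := g'.coeff (k - 1) with hu
  have hgdecomp : g = C u * P + C v * (X * P) := by
    have h0 : g' - C u * P = 0 := by
      apply aux_vanish _ (J.image α)
      · rw [himcard, degree_lt_iff_coeff_zero]
        intro j hj
        rw [coeff_sub, coeff_C_mul]
        rcases eq_or_lt_of_le hj with rfl | hlt
        · have h1 : P.coeff (k - 1) = 1 := by rw [← hPdeg]; exact hPmonic.coeff_natDegree
          rw [h1, mul_one]
          exact sub_eq_zero.2 hu.symm
        · rw [hg'coeff j (by omega),
            coeff_eq_zero_of_natDegree_lt (by omega : P.natDegree < j)]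
          ring
      · intro x hx
        obtain ⟨j, hjJ, rfl⟩ := Finset.mem_image.1 hx
        rw [eval_sub, hg'roots j hjJ, eval_mul, eval_C, hP, eval_prod]
        rw [Finset.prod_eq_zero hjJ (by simp)]
        ring
    have h1 := sub_eq_zero.1 h0
    rw [hg'] at h1
    linear_combination h1
  -- evaluation identity
  have heq : (u + v * b) * μJ = lam * (u + v * c) := by
    have hb' := congrArg (Polynomial.eval b) hgdecomp
    have hc' := congrArg (Polynomial.eval c) hgdecomp
    simp only [eval_add, eval_mul, eval_C, eval_X, hPev] at hb' hc'
    apply mul_right_cancel₀ hPc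
    rw [hg] at htw
    calc (u + v * b) * μJ * ∏ j ∈ J, (c - α j)
        = (u + v * b) * ∏ j ∈ J, (b - α j) := by rw [hprodrel]; ring
      _ = (twPoly k 1 h η f).eval b := by rw [hb']; ring
      _ = lam * (twPoly k 1 h η f).eval c := htw
      _ = lam * (u + v * c) * ∏ j ∈ J, (c - α j) := by rw [hc']; ring
  -- coefficient identity
  have hcoe : f ⟨h, hh⟩ = u * P.coeff h + v * (X * P).coeff h := by
    have h2 := congrArg (fun p => p.coeff h) hgdecomp
    simp only [coeff_add, coeff_C_mul] at h2
    rw [hg, twPoly_coeff hh, dif_pos hh, if_neg (by omega), add_zero] at h2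
    exact h2
  have hpK : P.coeff h ∈ K₀ := coeff_prod_mem K₀ J α hαK h
  have hqK : (X * P).coeff h ∈ K₀ := by
    cases h with
    | zero => simpa using K₀.zero_mem
    | succ n => rw [coeff_X_mul]; exact coeff_prod_mem K₀ J α hαK n
  have hv0 : v = 0 := by
    rcases hη with rfl | hηK
    · simp [hv]
    · by_contra hvne
      have hf : f ⟨h, hh⟩ ≠ 0 := by
        intro h0; rw [hv, h0, mul_zero] at hvne; exact hvne rfl
      have hmne : μJ - lam ≠ 0 := sub_ne_zero.2 hμJlam
      have hueq : u = v * ((lam * c - b * μJ) / (μJ - lam)) := by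
        rw [mul_div_assoc', eq_div_iff hmne]
        linear_combination heq
      set s : F := (lam * c - b * μJ) / (μJ - lam) * P.coeff h + (X * P).coeff h with hs
      have hsK : s ∈ K₀ :=
        K₀.add_mem (K₀.mul_mem (K₀.div_mem (K₀.sub_mem (K₀.mul_mem hlamK hc)
          (K₀.mul_mem hb hμJK)) (K₀.sub_mem hμJK hlamK)) hpK) hqK
      have hfs : f ⟨h, hh⟩ = η * f ⟨h, hh⟩ * s := by
        rw [hs]
        linear_combination hcoe + P.coeff h * hueq +
          ((lam * c - b * μJ) / (μJ - lam) * P.coeff h + (X * P).coeff h) * hv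
      have h1 : (1 : F) = η * s :=
        mul_left_cancel₀ hf (by rw [mul_one]; linear_combination hfs)
      have hs0 : s ≠ 0 := by
        intro h0; rw [h0, mul_zero] at h1; exact one_ne_zero h1
      have hηinv : η = s⁻¹ := eq_inv_of_mul_eq_one_right (by linear_combination -h1)
      exact hηK (hηinv ▸ inv_mem hsK)
  have hu0 : u = 0 := by
    rw [hv0] at heq
    have : u * (μJ - lam) = 0 := by linear_combination heq
    rcases mul_eq_zero.1 this with h0 | h0
    · exact h0
    · exact absurd (sub_eq_zero.1 h0) hμJlam
  have hg0 : g = 0 := by rw [hgdecomp, hu0, hv0]; simp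
  exact f_eq_zero_of_twPoly_eq_zero hh η f (hg ▸ hg0)

end RCaux

namespace RCaux
variable {F : Type*} [Field F]

lemma twPoly_add (k t h : ℕ) (η : F) (f g : Fin k → F) :
    twPoly k t h η (f + g) = twPoly k t h η f + twPoly k t h η g := by
  unfold twPoly
  by_cases H : h < k <;>
    simp [H, C_add, C_mul, add_mul, mul_add, Finset.sum_add_distrib] <;> ring

lemma twPoly_smul (k t h : ℕ) (η : F) (r : F) (f : Fin k → F) :
    twPoly k t h η (r • f) = r • twPoly k t h η f := by
  unfold twPoly
  by_cases H : h < k <;>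
    simp [H, smul_add, Finset.smul_sum, Polynomial.smul_eq_C_mul, C_mul, mul_add,
      Finset.mul_sum, mul_assoc, mul_left_comm]

/-- The encoding linear map of the RCTRS code. -/
noncomputable def Lmap (k h : ℕ) (η : F) {m : ℕ} (α : Fin m → F) (b c lam : F) :
    (Fin k → F) →ₗ[F] (Fin (m + 1) → F) where
  toFun f := Fin.snoc (fun i => (twPoly k 1 h η f).eval (α i))
      ((twPoly k 1 h η f).eval b - lam * (twPoly k 1 h η f).eval c)
  map_add' f g := by
    funext i
    refine Fin.lastCases ?_ (fun j => ?_) i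
    · simp [twPoly_add]; ring
    · simp [twPoly_add]
  map_smul' r f := by
    funext i
    refine Fin.lastCases ?_ (fun j => ?_) i
    · simp [twPoly_smul]; ring
    · simp [twPoly_smul]

@[simp] lemma Lmap_castSucc (k h : ℕ) (η : F) {m : ℕ} (α : Fin m → F) (b c lam : F)
    (f : Fin k → F) (j : Fin m) :
    Lmap k h η α b c lam f (Fin.castSucc j) = (twPoly k 1 h η f).eval (α j) := by
  simp [Lmap]

@[simp] lemma Lmap_last (k h : ℕ) (η : F) {m : ℕ} (α : Fin m → F) (b c lam : F)
    (f : Fin k → F) :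
    Lmap k h η α b c lam f (Fin.last m) =
      (twPoly k 1 h η f).eval b - lam * (twPoly k 1 h η f).eval c := by
  simp [Lmap]

lemma RCTRS_eq_range (k h : ℕ) (η : F) {m : ℕ} (α : Fin m → F) (b c lam : F) :
    RCTRS k 1 h η α b c lam = LinearMap.range (Lmap k h η α b c lam) := by
  have hset : rctrsWords k 1 h η α b c lam
      = ↑(LinearMap.range (Lmap k h η α b c lam)) := by
    ext w
    constructor
    · rintro ⟨f, rfl⟩; exact ⟨f, rfl⟩
    · rintro ⟨f, rfl⟩; exact ⟨f, rfl⟩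
  rw [RCTRS, hset, Submodule.span_eq]

lemma wt_eq {n : ℕ} (x : Fin n → F) [DecidablePred fun i => x i ≠ 0] :
    wt x = (Finset.univ.filter fun i => x i ≠ 0).card := by
  rw [wt, Nat.card_eq_fintype_card, Fintype.card_subtype]

end RCaux

theorem stmt18 {F : Type*} [Field F] [Fintype F] (K₀ : Subfield F)
    (G : Subgroup Fˣ) {m k h : ℕ} (μ : Fin m → F)
    (hGcard : Nat.card G = m + 1)
    (hGK : ∀ g : Fˣ, g ∈ G → (g : F) ∈ K₀)
    (hμinj : Function.Injective μ) (hμ1 : ∀ i, μ i ≠ 1)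
    (hGenum : unitsImage G = insert (1 : F) (Set.range μ))
    (b c : F) (hb : b ∈ K₀) (hc : c ∈ K₀) (hbc : b ≠ c)
    (α : Fin m → F) (hα : ∀ i, α i = (b - μ i * c) / (1 - μ i))
    (hh : h < k) (hkn : k ≤ m + 1)
    (lam : F) (hlamK : lam ∈ K₀) (hlamG : lam ∉ unitsImage G)
    (η : F) (hη : η = 0 ∨ η ∉ K₀) :
    IsMDS (RCTRS k 1 h η α b c lam) k := by
  classical
  have hμmem : ∀ i, μ i ∈ unitsImage G := by
    intro i
    rw [hGenum]
    exact Set.mem_insert_of_mem _ ⟨i, rfl⟩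
  have hμK : ∀ i, μ i ∈ K₀ := by
    intro i
    obtain ⟨u, huG, huv⟩ := hμmem i
    exact huv ▸ hGK u huG
  have h1μ : ∀ i, (1 : F) - μ i ≠ 0 := fun i => sub_ne_zero.2 (Ne.symm (hμ1 i))
  have hαK : ∀ i, α i ∈ K₀ := fun i => by
    rw [hα i]
    exact K₀.div_mem (K₀.sub_mem hb (K₀.mul_mem (hμK i) hc))
      (K₀.sub_mem K₀.one_mem (hμK i))
  have he1 : ∀ i, α i * (1 - μ i) = b - μ i * c := by
    intro i
    rw [hα i]
    exact div_mul_cancel₀ _ (h1μ i)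
  have hbα : ∀ i, b - α i = μ i * (c - α i) := by
    intro i
    linear_combination -he1 i
  have hcα : ∀ i, c - α i ≠ 0 := by
    intro i hzero
    apply hbc
    have h2 : c = α i := by linear_combination hzero
    have e1 := he1 i
    rw [← h2] at e1
    linear_combination -e1
  have hαinj : Function.Injective α := by
    intro i j hij
    apply hμinj
    rw [hα i, hα j, div_eq_div_iff (h1μ i) (h1μ j)] at hij
    have h3 : (μ i - μ j) * (b - c) = 0 := by linear_combination hij
    rcases mul_eq_zero.1 h3 with h4 | h4
    · exact sub_eq_zero.1 h4
    · exact absurd (sub_eq_zero.1 h4) hbc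
  have hchoice : ∀ i, ∃ u : Fˣ, u ∈ G ∧ (u : F) = μ i := by
    intro i
    obtain ⟨u, huG, huv⟩ := hμmem i
    exact ⟨u, huG, huv⟩
  choose uu huuG huuv using hchoice
  have hprodG : ∀ J : Finset (Fin m), (∏ j ∈ J, μ j) ∈ unitsImage G := by
    intro J
    refine ⟨∏ j ∈ J, uu j, prod_mem (fun j _ => huuG j), ?_⟩
    calc ((∏ j ∈ J, uu j : Fˣ) : F) = ∏ j ∈ J, ((uu j : Fˣ) : F) :=
          map_prod (Units.coeHom F) uu J
      _ = ∏ j ∈ J, μ j := Finset.prod_congr rfl fun j _ => huuv j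
  have hprodK : ∀ J : Finset (Fin m), (∏ j ∈ J, μ j) ∈ K₀ :=
    fun J => prod_mem fun j _ => hμK j
  have hprodne : ∀ J : Finset (Fin m), (∏ j ∈ J, μ j) ≠ lam :=
    fun J hJ => hlamG (hJ ▸ hprodG J)
  have hprodrel : ∀ J : Finset (Fin m),
      ∏ j ∈ J, (b - α j) = (∏ j ∈ J, μ j) * ∏ j ∈ J, (c - α j) := by
    intro J
    rw [← Finset.prod_mul_distrib]
    exact Finset.prod_congr rfl fun j _ => hbα j
  have hPc : ∀ J : Finset (Fin m), (∏ j ∈ J, (c - α j)) ≠ 0 :=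
    fun J => Finset.prod_ne_zero_iff.2 fun j _ => hcα j
  have key : ∀ (f : Fin k → F) (Z : Finset (Fin (m + 1))), k ≤ Z.card →
      (∀ i ∈ Z, RCaux.Lmap k h η α b c lam f i = 0) → f = 0 := by
    intro f Z hZcard hZzero
    set J0 : Finset (Fin m) := Finset.univ.filter (fun j => Fin.castSucc j ∈ Z) with hJ0
    have hroots : ∀ j ∈ J0, (twPoly k 1 h η f).eval (α j) = 0 := by
      intro j hj
      have h5 := hZzero _ (Finset.mem_filter.1 hj).2
      rwa [RCaux.Lmap_castSucc] at h5
    by_cases hlast : Fin.last m ∈ Z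
    · have htw : (twPoly k 1 h η f).eval b - lam * (twPoly k 1 h η f).eval c = 0 := by
        have h5 := hZzero _ hlast
        rwa [RCaux.Lmap_last] at h5
      have hcard : k - 1 ≤ J0.card := by
        have hsub : Z ⊆ insert (Fin.last m) (J0.image Fin.castSucc) := by
          intro i hi
          by_cases hi' : i = Fin.last m
          · exact Finset.mem_insert.2 (Or.inl hi')
          · refine Finset.mem_insert.2 (Or.inr (Finset.mem_image.2
              ⟨i.castPred hi', ?_, Fin.castSucc_castPred i hi'⟩))
            rw [hJ0, Finset.mem_filter]
            refine ⟨Finset.mem_univ _, ?_⟩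
            rwa [Fin.castSucc_castPred i hi']
        have h5 := Finset.card_le_card hsub
        have h6 := Finset.card_insert_le (Fin.last m) (J0.image Fin.castSucc)
        have h7 := Finset.card_image_le (f := Fin.castSucc) (s := J0)
        omega
      obtain ⟨J, hJsub, hJcard⟩ := Finset.exists_subset_card_eq hcard
      exact RCaux.caseB K₀ hh α η hη b c lam hb hc hlamK J hJcard
        (fun j _ => hαK j) (hαinj.injOn) (∏ j ∈ J, μ j) (hprodK J) (hprodne J)
        (hprodrel J) (hPc J) f (fun j hj => hroots j (hJsub hj))
        (by linear_combination htw)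
    · have hcard : k ≤ J0.card := by
        have hsub : Z ⊆ J0.image Fin.castSucc := by
          intro i hi
          have hi' : i ≠ Fin.last m := fun h5 => hlast (h5 ▸ hi)
          refine Finset.mem_image.2 ⟨i.castPred hi', ?_, Fin.castSucc_castPred i hi'⟩
          rw [hJ0, Finset.mem_filter]
          refine ⟨Finset.mem_univ _, ?_⟩
          rwa [Fin.castSucc_castPred i hi']
        have h5 := Finset.card_le_card hsub
        have h7 := Finset.card_image_le (f := Fin.castSucc) (s := J0)
        omega
      obtain ⟨J, hJsub, hJcard⟩ := Finset.exists_subset_card_eq hcard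
      exact RCaux.caseA K₀ hh α η hη J hJcard (fun j _ => hαK j) (hαinj.injOn) f
        (fun j hj => hroots j (hJsub hj))
  have hrange := RCaux.RCTRS_eq_range k h η α b c lam
  have hzero : ∀ f : Fin k → F, RCaux.Lmap k h η α b c lam f = 0 → f = 0 := by
    intro f hf
    refine key f Finset.univ (by simpa using hkn) (fun i _ => ?_)
    rw [hf]
    rfl
  have hinj : Function.Injective (RCaux.Lmap k h η α b c lam (m := m)) := by
    intro f g hfg
    have h5 := hzero (f - g) (by rw [map_sub, hfg, sub_self])
    exact sub_eq_zero.1 h5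
  constructor
  · rw [hrange, LinearMap.finrank_range_of_inj hinj, Module.finrank_fin_fun]
  · intro x hx hx0
    by_contra hwt
    push_neg at hwt
    rw [hrange, LinearMap.mem_range] at hx
    obtain ⟨f, rfl⟩ := hx
    set w : Fin (m + 1) → F := RCaux.Lmap k h η α b c lam f with hw
    have hwtle : wt w ≤ m + 1 - k := by omega
    have hwteq : wt w = (Finset.univ.filter fun i => w i ≠ 0).card := RCaux.wt_eq w
    have hsplit := Finset.card_filter_add_card_filter_not
      (s := (Finset.univ : Finset (Fin (m + 1)))) (p := fun i => w i = 0)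
    have hzcard : k ≤ (Finset.univ.filter fun i => w i = 0).card := by
      have hcu : (Finset.univ : Finset (Fin (m + 1))).card = m + 1 := by simp
      have : (Finset.univ.filter fun i => ¬ w i = 0).card
          = (Finset.univ.filter fun i => w i ≠ 0).card := rfl
      omega
    have hf0 : f = 0 := key f _ hzcard (fun i hi => (Finset.mem_filter.1 hi).2)
    apply hx0
    rw [hw, hf0, map_zero]
end
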